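/- Suppose height(C_k) is strictly greater than the maximal column height of D^k. Then every line of ℓ(D) joining a box of D^k to a box of C_k is labelled 1, and the boxes of D^k that are joined to a box of C_k by a line of ℓ(D) are exactly the boxes that are right extremal in D^k relative to ℓ(D^k). -/

import Mathlib

open scoped Classical

/-- height of column `j` of the diagram (columns numbered from 1). -/
def hgt (c : List ℕ) (j : ℕ) : ℕ := c.getD (j - 1) 0

/-- number of boxes in the columns strictly to the left of column `j`. -/
def off (c : List ℕ) (j : ℕ) : ℕ := (c.take (j - 1)).sum

/-- `(i, j)` (row `i`, column `j`) is a box of the diagram `D`. -/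
def IsBox (c : List ℕ) (i j : ℕ) : Prop :=
  1 ≤ j ∧ j ≤ c.length ∧ 1 ≤ i ∧ i ≤ hgt c j

/-- the entry of the box `(i, j)` in the tableau `T`. -/
def Tentry (c : List ℕ) (i j : ℕ) : ℕ := off c j + i

/-- the column of the box of `D` carrying entry `m` in `T`. -/
noncomputable def colOf (c : List ℕ) (m : ℕ) : ℕ := sInf {j | m ≤ (c.take j).sum}

/-- the row of the box of `D` carrying entry `m` in `T`. -/
noncomputable def rowOf (c : List ℕ) (m : ℕ) : ℕ := m - off c (colOf c m)

/-- the total order `≼` on entries: increasing down columns, then from right to left. -/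
def ple (c : List ℕ) (a b : ℕ) : Prop :=
  colOf c b < colOf c a ∨ (colOf c a = colOf c b ∧ a ≤ b)

/-- the strict version of `≼`. -/
def plt (c : List ℕ) (a b : ℕ) : Prop :=
  colOf c b < colOf c a ∨ (colOf c a = colOf c b ∧ a < b)

/-- column `j` has a left neighbour in `D`. -/
def HasLeftNb (c : List ℕ) (j : ℕ) : Prop :=
  ∃ i, 1 ≤ i ∧ i < j ∧ hgt c i = hgt c j ∧
    ∀ i', i < i' → i' < j → hgt c i' ≠ hgt c j

/-- the `j`-th column of the tableau `T`, rows to optional entries. -/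
def Tcol (c : List ℕ) (j : ℕ) : ℕ → Option ℕ := fun i =>
  if 1 ≤ i ∧ i ≤ hgt c j then some (Tentry c i j) else none

/-- one step of the propagation rule building `T(∞)`: the entry (if any) in row `t`
of column `j - 1` of `T(∞)` (given by `prev`) is propagated into the partially
built column `j` (given by `cur`). -/
noncomputable def propStep (c : List ℕ) (j : ℕ) (prev : ℕ → Option ℕ)
    (cur : ℕ → Option ℕ) (t : ℕ) : ℕ → Option ℕ :=
  match prev t with
  | none => cur
  | some l =>
    if hgt c j = t then
      if HasLeftNb c j ∧ cur (t + 1) = none then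
        Function.update cur (t + 1) (some l)
      else cur
    else
      if cur t = none then Function.update cur t (some l) else cur

/-- the `j`-th column of the composition tableau `T(∞)`. -/
noncomputable def TinfCol (c : List ℕ) : ℕ → ℕ → Option ℕ
  | 0 => fun _ => none
  | 1 => Tcol c 1
  | j + 2 =>
      (List.range (c.sum + 2)).foldl
        (propStep c (j + 2) (TinfCol c (j + 1))) (Tcol c (j + 2))

/-- labels of lines: `1` or `∗`. -/
inductive Lab : Type
  | one : Lab
  | star : Lab
deriving DecidableEq

/-- maximal height among the columns `1, …, j - 1`. -/
def maxHgt (c : List ℕ) (j : ℕ) : ℕ := (c.take (j - 1)).foldr max 0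

/-- the maximal column height of the diagram `D`. -/
def maxH (c : List ℕ) : ℕ := c.foldr max 0

/-- `LineB c a i j lab` : the line family `ℓ(D)` contains a line labelled `lab`
whose left end-point is the box of `D` carrying entry `a` in `T` and whose right
end-point is the box `(i, j)` (row `i` of column `C_j`). -/
def LineB (c : List ℕ) (a i j : ℕ) (lab : Lab) : Prop :=
  2 ≤ j ∧ j ≤ c.length ∧ 1 ≤ i ∧
    (match lab with
     | Lab.one =>
         (maxHgt c j < hgt c j ∧ i ≤ maxHgt c j + 1 ∧ TinfCol c (j - 1) i = some a)
       ∨ (hgt c j ≤ maxHgt c j ∧ i + 1 ≤ hgt c j ∧ TinfCol c (j - 1) i = some a)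
       ∨ (hgt c j ≤ maxHgt c j ∧ i = hgt c j ∧
           ¬(∃ j', 1 ≤ j' ∧ j' < j ∧ hgt c j' = hgt c j) ∧
           TinfCol c (j - 1) i = some a)
       ∨ (hgt c j ≤ maxHgt c j ∧ i = hgt c j ∧
           (∃ j', 1 ≤ j' ∧ j' < j ∧ hgt c j' = hgt c j) ∧
           TinfCol c (j - 1) (i + 1) = some a)
     | Lab.star =>
         hgt c j ≤ maxHgt c j ∧ i = hgt c j ∧
           (∃ j', 1 ≤ j' ∧ j' < j ∧ hgt c j' = hgt c j) ∧
           TinfCol c (j - 1) i = some a)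

/-- `LineE c a b lab` : `ℓ(D)` contains a line labelled `lab` joining the box of `D`
carrying entry `a` in `T` (on the left) to the box carrying entry `b` (on the right). -/
def LineE (c : List ℕ) (a b : ℕ) (lab : Lab) : Prop :=
  ∃ i j, LineB c a i j lab ∧ b = Tentry c i j

/-- the box `(i, j)` of `D` is right extremal relative to `ℓ(D)`. -/
def RExt (c : List ℕ) (i j : ℕ) : Prop :=
  IsBox c i j ∧ ∀ i' j', ¬ LineB c (Tentry c i j) i' j' Lab.one

/-- `c` is a composition of `n`. -/
def IsComposition (c : List ℕ) (n : ℕ) : Prop :=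
  c.sum = n ∧ ∀ x ∈ c, 0 < x

/-!
Column `j` of `T(∞)` has a closed form in terms of column `j - 1`: rows `1, …, hgt c j` carry the
`T`-entries of `C_j` and the entries of column `j - 1` below row `hgt c j` keep their rows, except
that if `C_j` has a left neighbour, the entry in row `hgt c j` replaces the one in row
`hgt c j + 1`; all other entries are stopped. Consequently a line labelled `1` from the box of `a`
ends in column `j` exactly when `a` occurs in column `j - 1` of `T(∞)` but not in column `j`, so a
box is right extremal iff its entry survives to the last column. When `C_k` is taller than every
other column, no `∗`-line ends in it and the lines labelled `1` ending in it start exactly at the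
entries of column `k - 1` of `T(∞)`, which is the same for `D` and for `D^k`.
-/

namespace CompositionTableau

variable {c : List ℕ}

lemma hgt_mem {j : ℕ} (h1 : 1 ≤ j) (h2 : j ≤ c.length) : hgt c j ∈ c := by
  rw [hgt, List.getD_eq_getElem c 0 (by omega)]
  exact List.getElem_mem _

lemma one_le_hgt (hpos : ∀ x ∈ c, 0 < x) {j : ℕ} (h1 : 1 ≤ j) (h2 : j ≤ c.length) :
    1 ≤ hgt c j :=
  hpos _ (hgt_mem h1 h2)

lemma getD_le_foldr_max (l : List ℕ) (k : ℕ) : l.getD k 0 ≤ l.foldr max 0 := by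
  rcases lt_or_ge k l.length with h | h
  · rw [List.getD_eq_getElem l 0 h]
    exact List.le_max_of_le' 0 (List.getElem_mem h) le_rfl
  · rw [List.getD_eq_default l 0 h]
    exact Nat.zero_le _

lemma hgt_le_sum (j : ℕ) : hgt c j ≤ c.sum := by
  rcases lt_or_ge (j - 1) c.length with h | h
  · rw [hgt, List.getD_eq_getElem c 0 h]
    exact List.le_sum_of_mem (List.getElem_mem h)
  · rw [hgt, List.getD_eq_default c 0 h]
    exact Nat.zero_le _

lemma hgt_take {K j : ℕ} (h1 : 1 ≤ j) (h2 : j ≤ K) : hgt (c.take K) j = hgt c j := by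
  simp only [hgt, List.getD_eq_getElem?_getD, List.getElem?_take]
  rw [if_pos (by omega)]

lemma hgt_le_maxHgt {i j : ℕ} (h1 : 1 ≤ i) (h2 : i < j) : hgt c i ≤ maxHgt c j := by
  rw [maxHgt, ← hgt_take h1 (by omega : i ≤ j - 1)]
  exact getD_le_foldr_max _ _

lemma off_take {K j : ℕ} (h : j ≤ K + 1) : off (c.take K) j = off c j := by
  rw [off, off, List.take_take, min_eq_left (by omega)]

lemma Tentry_take {K j : ℕ} (h : j ≤ K + 1) (i : ℕ) : Tentry (c.take K) i j = Tentry c i j := by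
  rw [Tentry, Tentry, off_take h]

lemma off_add_hgt {j : ℕ} (hj : 1 ≤ j) : off c j + hgt c j = off c (j + 1) := by
  rcases lt_or_ge (j - 1) c.length with h | h
  · obtain ⟨k, rfl⟩ : ∃ k, j = k + 1 := ⟨j - 1, by omega⟩
    rw [off, off, hgt, List.getD_eq_getElem c 0 h]
    simp only [Nat.add_sub_cancel]
    exact (List.sum_take_succ c k h).symm
  · rw [off, off, hgt, List.getD_eq_default c 0 h, List.take_of_length_le h,
      List.take_of_length_le (by omega), Nat.add_zero]

lemma off_mono {j j' : ℕ} (h : j' ≤ j) : off c j' ≤ off c j :=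
  ((List.take_prefix_take_left (by omega)).sublist).sum_le_sum fun _ _ => Nat.zero_le _

lemma Tentry_le_off_succ {i j : ℕ} (hj : 1 ≤ j) (hi : i ≤ hgt c j) :
    Tentry c i j ≤ off c (j + 1) := by
  rw [Tentry, ← off_add_hgt hj]
  omega

lemma hasLeftNb_iff (j : ℕ) :
    HasLeftNb c j ↔ ∃ j', 1 ≤ j' ∧ j' < j ∧ hgt c j' = hgt c j := by
  refine ⟨fun ⟨i, h1, h2, h3, _⟩ => ⟨i, h1, h2, h3⟩, fun ⟨i, h1, h2, h3⟩ => ?_⟩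
  let P m := 1 ≤ m ∧ hgt c m = hgt c j
  have hspec := Nat.findGreatest_spec (P := P) (by omega : i ≤ j - 1) ⟨h1, h3⟩
  refine ⟨Nat.findGreatest P (j - 1), hspec.1, ?_, hspec.2, fun i' hlt hlt' hi' => ?_⟩
  · have := Nat.findGreatest_le (P := P) (j - 1)
    omega
  · exact Nat.findGreatest_is_greatest hlt (by omega) ⟨by omega, hi'⟩

lemma hgt_le_maxHgt_of_hasLeftNb {j : ℕ} (h : HasLeftNb c j) : hgt c j ≤ maxHgt c j := by
  obtain ⟨i, h1, h2, h3⟩ := (hasLeftNb_iff j).1 h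
  exact h3 ▸ hgt_le_maxHgt h1 h2

lemma hasLeftNb_take {K j : ℕ} (h1 : 1 ≤ j) (h2 : j ≤ K) :
    HasLeftNb (c.take K) j ↔ HasLeftNb c j := by
  simp only [hasLeftNb_iff]
  refine exists_congr fun i =>
    ⟨fun ⟨hi1, hi2, hi3⟩ => ⟨hi1, hi2, ?_⟩, fun ⟨hi1, hi2, hi3⟩ => ⟨hi1, hi2, ?_⟩⟩
  · rwa [hgt_take hi1 (by omega), hgt_take h1 h2] at hi3
  · rwa [hgt_take hi1 (by omega), hgt_take h1 h2]

noncomputable def nextCol (c : List ℕ) (J : ℕ) (prev : ℕ → Option ℕ) : ℕ → Option ℕ := fun i =>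
  if 1 ≤ i ∧ i ≤ hgt c J then some (Tentry c i J)
  else if HasLeftNb c J ∧ i = hgt c J + 1 then prev (hgt c J)
  else prev i

noncomputable def infCol (c : List ℕ) : ℕ → ℕ → Option ℕ
  | 0 => fun _ => none
  | j + 1 => nextCol c (j + 1) (infCol c j)

lemma infCol_succ (j : ℕ) : infCol c (j + 1) = nextCol c (j + 1) (infCol c j) := rfl

lemma infCol_zero_row (j : ℕ) : infCol c j 0 = none := by
  induction j with
  | zero => rfl
  | succ j ih => simpa [infCol_succ, nextCol] using ih

lemma infCol_eq_none {j i : ℕ} (h : ∀ j', 1 ≤ j' → j' ≤ j → hgt c j' + 1 < i) :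
    infCol c j i = none := by
  induction j with
  | zero => rfl
  | succ j ih =>
    have hj := h (j + 1) (by omega) le_rfl
    rw [infCol_succ, nextCol, if_neg (by omega), if_neg (by omega)]
    exact ih fun j' h1 h2 => h j' h1 (by omega)

lemma infCol_isSome (hpos : ∀ x ∈ c, 0 < x) {j : ℕ} (hj : j ≤ c.length) {j' i : ℕ}
    (hj1 : 1 ≤ j') (hj2 : j' ≤ j) (hi1 : 1 ≤ i) (hi2 : i ≤ hgt c j') :
    (infCol c j i).isSome := by
  induction j generalizing j' i with
  | zero => omega
  | succ j ih =>
    rw [infCol_succ, nextCol]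
    split_ifs with hT hL
    · rfl
    · obtain ⟨p, hp1, hp2, hp3⟩ := (hasLeftNb_iff _).1 hL.1
      exact ih (by omega) hp1 (by omega) (one_le_hgt hpos (by omega) hj) hp3.ge
    · have : j' ≠ j + 1 := by rintro rfl; exact hT ⟨hi1, hi2⟩
      exact ih (by omega) hj1 (by omega) hi1 hi2

lemma infCol_le_off {j i a : ℕ} (h : infCol c j i = some a) : a ≤ off c (j + 1) := by
  induction j generalizing i with
  | zero => cases h
  | succ j ih =>
    have hoff := off_mono (c := c) (Nat.le_succ (j + 1))
    rw [infCol_succ, nextCol] at h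
    split_ifs at h with hT hL
    · cases h
      exact Tentry_le_off_succ (by omega) hT.2
    · exact (ih h).trans hoff
    · exact (ih h).trans hoff

lemma infCol_succ_eq_some {j i a : ℕ} (h : infCol c (j + 1) i = some a) :
    (1 ≤ i ∧ i ≤ hgt c (j + 1) ∧ a = Tentry c i (j + 1)) ∨
    (HasLeftNb c (j + 1) ∧ i = hgt c (j + 1) + 1 ∧ infCol c j (hgt c (j + 1)) = some a) ∨
    (hgt c (j + 1) < i ∧ ¬(HasLeftNb c (j + 1) ∧ i = hgt c (j + 1) + 1) ∧
      infCol c j i = some a) := by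
  rw [infCol_succ, nextCol] at h
  split_ifs at h with hT hL
  · exact Or.inl ⟨hT.1, hT.2, (Option.some_inj.1 h).symm⟩
  · exact Or.inr (Or.inl ⟨hL.1, hL.2, h⟩)
  · have : i ≠ 0 := by rintro rfl; rw [infCol_zero_row] at h; cases h
    exact Or.inr (Or.inr ⟨by omega, hL, h⟩)

lemma infCol_ne_some_Tentry {j r i : ℕ} (hi : 1 ≤ i) :
    infCol c j r ≠ some (Tentry c i (j + 1)) := fun h => by
  have := infCol_le_off h
  rw [Tentry] at this
  omega

lemma infCol_row_unique {j i i' a : ℕ} (h : infCol c j i = some a)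
    (h' : infCol c j i' = some a) : i = i' := by
  induction j generalizing i i' with
  | zero => cases h
  | succ j ih =>
    rcases infCol_succ_eq_some h with ⟨p1, -, rfl⟩ | ⟨-, rfl, p⟩ | ⟨p1, p2, p⟩ <;>
      rcases infCol_succ_eq_some h' with ⟨q1, -, q⟩ | ⟨-, rfl, q⟩ | ⟨q1, -, q⟩
    · simpa [Tentry] using q
    · exact absurd q (infCol_ne_some_Tentry p1)
    · exact absurd q (infCol_ne_some_Tentry p1)
    · exact absurd p (q ▸ infCol_ne_some_Tentry q1)
    · rfl
    · exact absurd (ih p q) (by omega)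
    · exact absurd p (q ▸ infCol_ne_some_Tentry q1)
    · exact absurd (ih p q) (by omega)
    · exact ih p q

lemma infCol_take {K j : ℕ} (hj : j ≤ K) : infCol (c.take K) j = infCol c j := by
  induction j with
  | zero => rfl
  | succ j ih =>
    funext i
    simp only [infCol_succ, nextCol, ih (by omega), hgt_take (by omega) hj,
      Tentry_take (by omega : j + 1 ≤ K + 1), hasLeftNb_take (by omega) hj]

section Propagation

variable {J : ℕ} {prev : ℕ → Option ℕ}

def truncCol (prev : ℕ → Option ℕ) (T : ℕ) : ℕ → Option ℕ := fun i =>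
  if i < T then prev i else none

lemma truncCol_succ_apply {T i : ℕ} (hi : i ≠ T) :
    truncCol prev (T + 1) i = truncCol prev T i := by
  simp only [truncCol, Nat.lt_succ_iff_lt_or_eq, hi, or_false]

lemma truncCol_succ_of_eq_none {T : ℕ} (hT : prev T = none) :
    truncCol prev (T + 1) = truncCol prev T := by
  funext i
  rcases eq_or_ne i T with rfl | hi
  · simp [truncCol, hT]
  · exact truncCol_succ_apply hi

lemma nextCol_truncCol_succ_apply {T i : ℕ} (hi : i ≠ T)
    (hi' : ¬(HasLeftNb c J ∧ hgt c J = T ∧ i = T + 1)) :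
    nextCol c J (truncCol prev (T + 1)) i = nextCol c J (truncCol prev T) i := by
  simp only [nextCol]
  split_ifs with h1 h2
  · rfl
  · exact truncCol_succ_apply fun h => hi' ⟨h2.1, h, by omega⟩
  · exact truncCol_succ_apply hi

lemma propStep_apply_of_ne {cur : ℕ → Option ℕ} {T i : ℕ} (hi : i ≠ T)
    (hi' : ¬(HasLeftNb c J ∧ hgt c J = T ∧ i = T + 1)) :
    propStep c J prev cur T i = cur i := by
  rcases hT : prev T with _ | l
  · simp only [propStep, hT]
  · simp only [propStep, hT]
    split_ifs with h1 h2 h3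
    · exact Function.update_of_ne (fun h => hi' ⟨h2.1, h1, h⟩) _ _
    · rfl
    · exact Function.update_of_ne hi _ _
    · rfl

lemma propStep_nextCol_truncCol (hprev0 : prev 0 = none)
    (hLN : HasLeftNb c J → prev (hgt c J) ≠ none) (T : ℕ) :
    propStep c J prev (nextCol c J (truncCol prev T)) T =
      nextCol c J (truncCol prev (T + 1)) := by
  rcases hT : prev T with _ | l
  · simp only [propStep, hT, truncCol_succ_of_eq_none hT]
  have hT1 : 1 ≤ T := Nat.one_le_iff_ne_zero.2 fun h => by simp [h, hprev0] at hT
  funext i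
  by_cases hi : i ≠ T ∧ ¬(HasLeftNb c J ∧ hgt c J = T ∧ i = T + 1)
  · rw [propStep_apply_of_ne hi.1 hi.2, nextCol_truncCol_succ_apply hi.1 hi.2]
  simp only [propStep, hT]
  rw [not_and_or, not_not, not_not] at hi
  by_cases hh : hgt c J = T
  · subst hh
    rcases hi with rfl | ⟨hL, -, rfl⟩
    · split_ifs <;> simp_all [nextCol]
    · simp [hL, nextCol, truncCol, hT]
  · obtain rfl : i = T := hi.resolve_right fun h => hh h.2.1
    rw [if_neg hh]
    by_cases hA : 1 ≤ i ∧ i ≤ hgt c J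
    · simp [nextCol, hA]
    by_cases hB : HasLeftNb c J ∧ i = hgt c J + 1
    · simp [nextCol, truncCol, hB, hLN hB.1]
    · simp [nextCol, truncCol, hA, hB, hT]

lemma Tcol_eq_nextCol : Tcol c J = nextCol c J fun _ => none := by
  funext i
  simp only [Tcol, nextCol]
  split_ifs <;> rfl

lemma foldl_propStep (hprev0 : prev 0 = none) (hLN : HasLeftNb c J → prev (hgt c J) ≠ none)
    (T : ℕ) :
    (List.range T).foldl (propStep c J prev) (Tcol c J) = nextCol c J (truncCol prev T) := by
  induction T with
  | zero => exact Tcol_eq_nextCol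
  | succ T ih =>
    rw [List.range_succ, List.foldl_append, ih, List.foldl_cons, List.foldl_nil,
      propStep_nextCol_truncCol hprev0 hLN]

lemma truncCol_eq_self {T : ℕ} (h : ∀ i, T ≤ i → prev i = none) : truncCol prev T = prev := by
  funext i
  simp only [truncCol]
  split_ifs with hi
  · rfl
  · exact (h i (not_lt.1 hi)).symm

end Propagation

theorem TinfCol_eq_infCol (hpos : ∀ x ∈ c, 0 < x) {j : ℕ} (hj : j ≤ c.length) :
    TinfCol c j = infCol c j := by
  induction j with
  | zero => rfl
  | succ j ih =>
    rcases j with _ | j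
    · exact Tcol_eq_nextCol
    have hLN : HasLeftNb c (j + 2) → infCol c (j + 1) (hgt c (j + 2)) ≠ none := fun hL => by
      obtain ⟨p, hp1, hp2, hp3⟩ := (hasLeftNb_iff _).1 hL
      exact Option.isSome_iff_ne_none.1 <|
        infCol_isSome hpos (by omega) hp1 (by omega) (one_le_hgt hpos (by omega) hj) hp3.ge
    have hvanish : ∀ i, c.sum + 2 ≤ i → infCol c (j + 1) i = none := fun i hi =>
      infCol_eq_none fun j' _ _ => by have := hgt_le_sum (c := c) j'; omega
    change (List.range (c.sum + 2)).foldl (propStep c (j + 2) (TinfCol c (j + 1)))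
      (Tcol c (j + 2)) = _
    rw [ih (by omega), foldl_propStep (infCol_zero_row _) hLN, truncCol_eq_self hvanish]
    rfl

lemma infCol_row_bounds {J r a : ℕ} (h : infCol c J r = some a) :
    1 ≤ r ∧ r ≤ maxHgt c (J + 1) + 1 := by
  refine ⟨Nat.one_le_iff_ne_zero.2 fun hr => by simp [hr, infCol_zero_row] at h, ?_⟩
  by_contra hr
  have hbelow : ∀ j', 1 ≤ j' → j' ≤ J → hgt c j' + 1 < r := fun j' h1 h2 => by
    have := hgt_le_maxHgt (c := c) h1 (show j' < J + 1 by omega)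
    omega
  rw [infCol_eq_none hbelow] at h
  cases h

lemma lineB_one_iff_of_tall {a i j : ℕ} (htall : maxHgt c j < hgt c j) :
    LineB c a i j Lab.one ↔
      2 ≤ j ∧ j ≤ c.length ∧ 1 ≤ i ∧ i ≤ maxHgt c j + 1 ∧ TinfCol c (j - 1) i = some a := by
  simp only [LineB]
  constructor
  · rintro ⟨h1, h2, h3, ⟨-, h4, h5⟩ | ⟨h, -⟩ | ⟨h, -⟩ | ⟨h, -⟩⟩
    · exact ⟨h1, h2, h3, h4, h5⟩
    all_goals omega
  · rintro ⟨h1, h2, h3, h4, h5⟩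
    exact ⟨h1, h2, h3, Or.inl ⟨htall, h4, h5⟩⟩

lemma not_lineB_star_of_tall {a i j : ℕ} (htall : maxHgt c j < hgt c j) :
    ¬LineB c a i j Lab.star := fun h => by
  have := h.2.2.2.1
  omega

lemma exists_lineB_one_iff_of_tall (hpos : ∀ x ∈ c, 0 < x) {J a : ℕ} (hJ : 1 ≤ J)
    (hJc : J + 1 ≤ c.length) (htall : maxHgt c (J + 1) < hgt c (J + 1)) :
    (∃ i, LineB c a i (J + 1) Lab.one) ↔ ∃ r, infCol c J r = some a := by
  simp only [lineB_one_iff_of_tall htall, Nat.add_sub_cancel,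
    TinfCol_eq_infCol hpos (by omega : J ≤ c.length)]
  constructor
  · rintro ⟨i, -, -, -, -, h⟩
    exact ⟨i, h⟩
  · rintro ⟨r, h⟩
    have hrow := infCol_row_bounds h
    exact ⟨r, by omega, hJc, hrow.1, hrow.2, h⟩

lemma exists_lineB_one_iff_of_not_tall (hpos : ∀ x ∈ c, 0 < x) {J r a : ℕ} (hJ : 1 ≤ J)
    (hJc : J + 1 ≤ c.length) (hshort : hgt c (J + 1) ≤ maxHgt c (J + 1))
    (hr : infCol c J r = some a) :
    (∃ i, LineB c a i (J + 1) Lab.one) ↔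
      r < hgt c (J + 1) ∨ (r = hgt c (J + 1) ∧ ¬HasLeftNb c (J + 1)) ∨
        (HasLeftNb c (J + 1) ∧ r = hgt c (J + 1) + 1) := by
  simp only [LineB, ← hasLeftNb_iff, Nat.add_sub_cancel,
    TinfCol_eq_infCol hpos (by omega : J ≤ c.length)]
  have hrow := infCol_row_bounds hr
  constructor
  · rintro ⟨i, -, -, -, ⟨h, -⟩ | ⟨-, hi, h⟩ | ⟨-, rfl, hL, h⟩ | ⟨-, rfl, hL, h⟩⟩
    · omega
    · obtain rfl := infCol_row_unique hr h
      exact Or.inl (by omega)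
    · exact Or.inr (Or.inl ⟨infCol_row_unique hr h, hL⟩)
    · exact Or.inr (Or.inr ⟨hL, infCol_row_unique hr h⟩)
  · have h1 := one_le_hgt hpos (by omega) hJc
    rintro (hlt | ⟨rfl, hL⟩ | ⟨hL, rfl⟩)
    · exact ⟨r, by omega, hJc, hrow.1, Or.inr (Or.inl ⟨hshort, by omega, hr⟩)⟩
    · exact ⟨_, by omega, hJc, h1, Or.inr (Or.inr (Or.inl ⟨hshort, rfl, hL, hr⟩))⟩
    · exact ⟨_, by omega, hJc, h1, Or.inr (Or.inr (Or.inr ⟨hshort, rfl, hL, hr⟩))⟩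

lemma exists_infCol_succ_iff {J r a : ℕ} (hr : infCol c J r = some a) :
    (∃ r', infCol c (J + 1) r' = some a) ↔
      (HasLeftNb c (J + 1) ∧ r = hgt c (J + 1)) ∨
        (hgt c (J + 1) < r ∧ ¬(HasLeftNb c (J + 1) ∧ r = hgt c (J + 1) + 1)) := by
  have hrow := (infCol_row_bounds hr).1
  constructor
  · rintro ⟨r', h⟩
    rcases infCol_succ_eq_some h with ⟨h1, -, rfl⟩ | ⟨hL, -, h⟩ | ⟨hlt, hL, h⟩
    · exact absurd hr (infCol_ne_some_Tentry h1)
    · exact Or.inl ⟨hL, infCol_row_unique hr h⟩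
    · obtain rfl := infCol_row_unique hr h
      exact Or.inr ⟨hlt, hL⟩
  · rintro (⟨hL, rfl⟩ | ⟨hlt, hL⟩)
    · refine ⟨hgt c (J + 1) + 1, ?_⟩
      rw [infCol_succ, nextCol, if_neg (by omega), if_pos ⟨hL, rfl⟩, hr]
    · exact ⟨r, by rw [infCol_succ, nextCol, if_neg (by omega), if_neg hL, hr]⟩

lemma exists_lineB_one_iff_not_exists_infCol_succ (hpos : ∀ x ∈ c, 0 < x) {J r a : ℕ}
    (hJ : 1 ≤ J) (hJc : J + 1 ≤ c.length) (hr : infCol c J r = some a) :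
    (∃ i, LineB c a i (J + 1) Lab.one) ↔ ¬∃ r', infCol c (J + 1) r' = some a := by
  rw [exists_infCol_succ_iff hr]
  by_cases htall : maxHgt c (J + 1) < hgt c (J + 1)
  · have hL : ¬HasLeftNb c (J + 1) := fun hL => by
      have := hgt_le_maxHgt_of_hasLeftNb hL
      omega
    have := (infCol_row_bounds hr).2
    rw [exists_lineB_one_iff_of_tall hpos hJ hJc htall]
    refine iff_of_true ⟨r, hr⟩ ?_
    rintro (⟨hL', -⟩ | ⟨hlt, -⟩)
    · exact hL hL'
    · omega
  · rw [exists_lineB_one_iff_of_not_tall hpos hJ hJc (not_lt.1 htall) hr]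
    by_cases hL : HasLeftNb c (J + 1) <;> simp [hL] <;> omega

lemma infCol_Tentry {i j : ℕ} (hj : 1 ≤ j) (hi1 : 1 ≤ i) (hi2 : i ≤ hgt c j) :
    infCol c j i = some (Tentry c i j) := by
  obtain ⟨j, rfl⟩ : ∃ j', j = j' + 1 := ⟨j - 1, by omega⟩
  rw [infCol_succ, nextCol, if_pos ⟨hi1, hi2⟩]

lemma exists_infCol_of_exists_infCol_succ {J a : ℕ} (ha : a ≤ off c (J + 1))
    (h : ∃ r, infCol c (J + 1) r = some a) : ∃ r, infCol c J r = some a := by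
  obtain ⟨r, hr⟩ := h
  rcases infCol_succ_eq_some hr with ⟨h1, -, rfl⟩ | ⟨-, -, h⟩ | ⟨-, -, h⟩
  · rw [Tentry] at ha
    omega
  · exact ⟨_, h⟩
  · exact ⟨_, h⟩

lemma exists_infCol_of_le {J K a : ℕ} (ha : a ≤ off c (J + 1)) (hJK : J ≤ K)
    (h : ∃ r, infCol c K r = some a) : ∃ r, infCol c J r = some a := by
  induction K, hJK using Nat.le_induction with
  | base => exact h
  | succ K hJK ih =>
    exact ih (exists_infCol_of_exists_infCol_succ (ha.trans (off_mono (by omega))) h)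

lemma exists_infCol_of_lineB (hpos : ∀ x ∈ c, 0 < x) {a i j : ℕ} (h : LineB c a i j Lab.one) :
    ∃ r, infCol c (j - 1) r = some a := by
  rw [← TinfCol_eq_infCol hpos (by have := h.2.1; omega)]
  obtain ⟨-, -, -, ⟨-, -, h⟩ | ⟨-, -, h⟩ | ⟨-, -, -, h⟩ | ⟨-, -, -, h⟩⟩ := h <;> exact ⟨_, h⟩

theorem forall_not_lineB_iff_exists_infCol_length (hpos : ∀ x ∈ c, 0 < x) {i j : ℕ}
    (hbox : IsBox c i j) :
    (∀ i' j', ¬LineB c (Tentry c i j) i' j' Lab.one) ↔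
      ∃ r, infCol c c.length r = some (Tentry c i j) := by
  obtain ⟨hj1, hjc, hi1, hi2⟩ := hbox
  have hlow : off c j < Tentry c i j := by rw [Tentry]; omega
  have hup : Tentry c i j ≤ off c (j + 1) := Tentry_le_off_succ hj1 hi2
  constructor
  · intro hno
    suffices ∀ J, j ≤ J → J ≤ c.length → ∃ r, infCol c J r = some (Tentry c i j) from
      this _ hjc le_rfl
    intro J hjJ
    induction J, hjJ using Nat.le_induction with
    | base => exact fun _ => ⟨i, infCol_Tentry hj1 hi1 hi2⟩
    | succ J hjJ ih =>
      intro hJc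
      obtain ⟨r, hr⟩ := ih (by omega)
      by_contra hstop
      obtain ⟨i', hline⟩ :=
        (exists_lineB_one_iff_not_exists_infCol_succ hpos (by omega) hJc hr).2 hstop
      exact hno i' (J + 1) hline
  · rintro halive i' j' hline
    obtain ⟨r, hr⟩ := exists_infCol_of_lineB hpos hline
    obtain ⟨J, rfl⟩ : ∃ J, j' = J + 1 := ⟨j' - 1, by have := hline.1; omega⟩
    rw [Nat.add_sub_cancel] at hr
    have hjJ : j ≤ J := by
      by_contra hJ
      have := (infCol_le_off hr).trans (off_mono (c := c) (by omega : J + 1 ≤ j))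
      omega
    have hJc := hline.2.1
    have halive' := exists_infCol_of_le (hup.trans (off_mono (by omega))) hJc halive
    exact (exists_lineB_one_iff_not_exists_infCol_succ hpos (by omega) hJc hr).1 ⟨i', hline⟩ halive'

end CompositionTableau

open CompositionTableau

theorem statement16_general (n : ℕ) (c : List ℕ) (hc : IsComposition c n)
    (htall : maxH (c.take (c.length - 1)) < hgt c c.length) :
    (∀ a i, ¬ LineB c a i c.length Lab.star) ∧
    (∀ i j, IsBox (c.take (c.length - 1)) i j →
      ((∃ i', LineB c (Tentry c i j) i' c.length Lab.one) ↔
        ∀ i' j', ¬ LineB (c.take (c.length - 1))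
          (Tentry (c.take (c.length - 1)) i j) i' j' Lab.one)) := by
  have hpos := hc.2
  have htall' : maxHgt c c.length < hgt c c.length := htall
  refine ⟨fun a i => not_lineB_star_of_tall htall', fun i j hbox => ?_⟩
  have hj1 : 1 ≤ j := hbox.1
  have hjc : j ≤ c.length - 1 := by simpa using hbox.2.1
  obtain ⟨J, hJ⟩ : ∃ J, c.length = J + 1 := ⟨c.length - 1, by omega⟩
  simp only [hJ, Nat.add_sub_cancel] at htall' hbox hjc ⊢
  have hJlen : (c.take J).length = J := List.length_take_of_le (by omega)
  rw [forall_not_lineB_iff_exists_infCol_length (fun x hx => hpos x (List.mem_of_mem_take hx)) hbox,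
    Tentry_take (by omega), hJlen, infCol_take le_rfl,
    exists_lineB_one_iff_of_tall hpos (by omega) (by omega) htall']

/-- suppose the height of `C_k` strictly exceeds the maximal column
height of `D^k`.  Then every line of `ℓ(D)` joining a box of `D^k` to a box of
`C_k` is labelled `1`, and the boxes of `D^k` joined to a box of `C_k` by a line of
`ℓ(D)` are exactly the boxes that are right extremal in `D^k` relative to
`ℓ(D^k)`. -/
theorem statement16 (n : ℕ) (hn : 0 < n) (c : List ℕ) (hc : IsComposition c n)
    (hk : 2 ≤ c.length)
    (htall : maxH (c.take (c.length - 1)) < hgt c c.length) :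
    (∀ a i, ¬ LineB c a i c.length Lab.star) ∧
    (∀ i j, IsBox (c.take (c.length - 1)) i j →
      ((∃ i', LineB c (Tentry c i j) i' c.length Lab.one) ↔
        ∀ i' j', ¬ LineB (c.take (c.length - 1))
          (Tentry (c.take (c.length - 1)) i j) i' j' Lab.one)) :=
  statement16_general n c hc htall
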